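/- Let G = (V, E) be a finite simple graph and let Jσ ≥ 0, Jτ ≥ 0, Jστ ≤ 0 with tanh Jστ ≥ − tanh Jσ · tanh Jτ. Let μ be the free-boundary Ashkin–Teller Gibbs measure: μ(σ,τ) ∝ ∏_{{i,j}∈E} exp(Jσ σ(i)σ(j) + Jτ τ(i)τ(j) + Jστ σ(i)σ(j)τ(i)τ(j)) over pairs (σ,τ) : V → {−1,1}². Then for all A, B ⊆ V, writing σ_A = ∏_{i∈A} σ(i) and τ_B = ∏_{i∈B} τ(i): μ(σ_A·σ_B) ≥ μ(σ_A)·μ(σ_B), μ(τ_A·τ_B) ≥ μ(τ_A)·μ(τ_B), and μ(σ_A·τ_B) ≤ μ(σ_A)·μ(τ_B). -/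

import Mathlib

/-- The spin value `±1` attached to a Boolean. -/
def spin (b : Bool) : ℝ := if b then 1 else -1

/-- The Ashkin–Teller Boltzmann weight of an edge, as a function on `Sym2 V`. -/
noncomputable def atWeight {V : Type*} (Jσ Jτ Jστ : ℝ) (σ τ : V → ℝ) : Sym2 V → ℝ :=
  Sym2.lift ⟨fun i j =>
      Real.exp (Jσ * (σ i * σ j) + Jτ * (τ i * τ j) + Jστ * (σ i * σ j * (τ i * τ j))),
    fun i j => by ring_nf⟩

/-- The total Ashkin–Teller Boltzmann weight of a pair of spin configurations on a
finite simple graph (free boundary condition). -/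
noncomputable def atW {V : Type*} [Fintype V] [DecidableEq V] (G : SimpleGraph V)
    [DecidableRel G.Adj] (Jσ Jτ Jστ : ℝ) (στ : (V → Bool) × (V → Bool)) : ℝ :=
  ∏ e ∈ G.edgeFinset,
    atWeight Jσ Jτ Jστ (fun i => spin (στ.1 i)) (fun i => spin (στ.2 i)) e

/-- The free-boundary Ashkin–Teller expectation of `f`. -/
noncomputable def atE {V : Type*} [Fintype V] [DecidableEq V] (G : SimpleGraph V)
    [DecidableRel G.Adj] (Jσ Jτ Jστ : ℝ) (f : (V → Bool) × (V → Bool) → ℝ) : ℝ :=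
  (∑ στ : (V → Bool) × (V → Bool), f στ * atW G Jσ Jτ Jστ στ) /
    (∑ στ : (V → Bool) × (V → Bool), atW G Jσ Jτ Jστ στ)

set_option linter.unusedSectionVars false
namespace AT19

variable {V : Type*} [Fintype V] [DecidableEq V]

/-- A pair of Ashkin-Teller configurations (the "duplicated" system). -/
abbrev PCfg (V : Type*) := ((V → Bool) × (V → Bool)) × ((V → Bool) × (V → Bool))

/-- The pair of booleans attached to a "layer" `(v, b)`:
for `b = false` (σ-layer) it is `(σ v, σ' v)`; for `b = true` (τ-layer) it is `(τ' v, τ v)`. -/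
def bpair : V × Bool → PCfg V → Bool × Bool
  | (v, false), p => (p.1.1 v, p.2.1 v)
  | (v, true),  p => (p.2.2 v, p.1.2 v)

/-- Real pair of spins at a layer. -/
def rpair (ℓ : V × Bool) (p : PCfg V) : ℝ × ℝ :=
  (spin (bpair ℓ p).1, spin (bpair ℓ p).2)

inductive Gen | one | s | d | s2 | d2
deriving DecidableEq

def gval : Gen → ℝ × ℝ → ℝ
  | .one, _ => 1
  | .s, u => u.1 + u.2
  | .d, u => u.1 - u.2
  | .s2, u => (u.1 + u.2) ^ 2
  | .d2, u => (u.1 - u.2) ^ 2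

def monomial (m : V × Bool → Gen) : PCfg V → ℝ := fun p => ∏ ℓ, gval (m ℓ) (rpair ℓ p)

inductive Cone : (PCfg V → ℝ) → Prop
  | base (c : ℝ) (hc : 0 ≤ c) (m : V × Bool → Gen) : Cone (fun p => c * monomial m p)
  | add {f g} : Cone f → Cone g → Cone (fun p => f p + g p)

def gmulc : Gen → Gen → ℝ
  | .one, _ => 1
  | _, .one => 1
  | .s, .s => 1
  | .s, .d => 0
  | .s, .s2 => 4
  | .s, .d2 => 0
  | .d, .s => 0
  | .d, .d => 1
  | .d, .s2 => 0
  | .d, .d2 => 4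
  | .s2, .s => 4
  | .s2, .d => 0
  | .s2, .s2 => 4
  | .s2, .d2 => 0
  | .d2, .s => 0
  | .d2, .d => 4
  | .d2, .s2 => 0
  | .d2, .d2 => 4

def gmulg : Gen → Gen → Gen
  | .one, g => g
  | g, .one => g
  | .s, .s => .s2
  | .s, .d => .one
  | .s, .s2 => .s
  | .s, .d2 => .one
  | .d, .s => .one
  | .d, .d => .d2
  | .d, .s2 => .one
  | .d, .d2 => .d
  | .s2, .s => .s
  | .s2, .d => .one
  | .s2, .s2 => .s2
  | .s2, .d2 => .one
  | .d2, .s => .one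
  | .d2, .d => .d
  | .d2, .s2 => .one
  | .d2, .d2 => .d2

lemma gmulc_nonneg (g g' : Gen) : 0 ≤ gmulc g g' := by
  cases g <;> cases g' <;> norm_num [gmulc]

lemma gval_mul (g g' : Gen) (b b' : Bool) :
    gval g (spin b, spin b') * gval g' (spin b, spin b') =
      gmulc g g' * gval (gmulg g g') (spin b, spin b') := by
  cases g <;> cases g' <;> cases b <;> cases b' <;> norm_num [gval, gmulc, gmulg, spin]

lemma monomial_mul (m m' : V × Bool → Gen) (p : PCfg V) :
    monomial m p * monomial m' p =
      (∏ ℓ, gmulc (m ℓ) (m' ℓ)) * monomial (fun ℓ => gmulg (m ℓ) (m' ℓ)) p := by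
  unfold monomial
  rw [← Finset.prod_mul_distrib, ← Finset.prod_mul_distrib]
  refine Finset.prod_congr rfl fun ℓ _ => ?_
  exact gval_mul (m ℓ) (m' ℓ) (bpair ℓ p).1 (bpair ℓ p).2

lemma Cone.mul {f g : PCfg V → ℝ} (hf : Cone f) (hg : Cone g) : Cone (fun p => f p * g p) := by
  induction hf with
  | base c hc m =>
    induction hg with
    | base c' hc' m' =>
      have heq : (fun p : PCfg V => c * monomial m p * (c' * monomial m' p)) =
          fun p => (c * c' * ∏ ℓ, gmulc (m ℓ) (m' ℓ)) *
            monomial (fun ℓ => gmulg (m ℓ) (m' ℓ)) p := by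
        funext p
        rw [show c * monomial m p * (c' * monomial m' p)
            = c * c' * (monomial m p * monomial m' p) by ring, monomial_mul]
        ring
      rw [heq]
      exact Cone.base _ (mul_nonneg (mul_nonneg hc hc')
        (Finset.prod_nonneg fun ℓ _ => gmulc_nonneg _ _)) _
    | add hg1 hg2 ih1 ih2 =>
      have h := Cone.add ih1 ih2
      convert h using 1
      funext p; ring
  | add hf1 hf2 ih1 ih2 =>
    have h := Cone.add ih1 ih2
    convert h using 1
    funext p; ring


/-- The duplicated configuration space is equivalent to assignments of a pair of booleans
to each layer. -/
def layerEquiv : PCfg V ≃ ((V × Bool) → Bool × Bool) where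
  toFun p := fun ℓ => bpair ℓ p
  invFun F := ((fun v => (F (v, false)).1, fun v => (F (v, true)).2),
               ((fun v => (F (v, false)).2, fun v => (F (v, true)).1)))
  left_inv p := by
    refine Prod.ext (Prod.ext ?_ ?_) (Prod.ext ?_ ?_) <;> funext v <;> rfl
  right_inv F := by
    funext ℓ
    obtain ⟨v, b⟩ := ℓ
    cases b <;> simp [bpair]

lemma layer_sum_nonneg (g : Gen) :
    0 ≤ ∑ bb : Bool × Bool, gval g (spin bb.1, spin bb.2) := by
  cases g <;> simp [gval, spin, Fintype.sum_prod_type, Fintype.sum_bool] <;> norm_num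

lemma sum_monomial_nonneg (m : V × Bool → Gen) : 0 ≤ ∑ p : PCfg V, monomial m p := by
  have hs : ∑ p : PCfg V, monomial m p
      = ∑ F : (V × Bool) → Bool × Bool, ∏ ℓ, gval (m ℓ) (spin (F ℓ).1, spin (F ℓ).2) := by
    refine Fintype.sum_equiv layerEquiv _ _ fun p => ?_
    rfl
  have hps := Fintype.prod_sum (κ := fun _ : V × Bool => Bool × Bool)
    (fun ℓ bb => gval (m ℓ) (spin bb.1, spin bb.2))
  rw [hs, ← hps]
  exact Finset.prod_nonneg fun ℓ _ => layer_sum_nonneg (m ℓ)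

lemma Cone.sum_nonneg {f : PCfg V → ℝ} (hf : Cone f) : 0 ≤ ∑ p : PCfg V, f p := by
  induction hf with
  | base c hc m =>
    rw [← Finset.mul_sum]
    exact mul_nonneg hc (sum_monomial_nonneg m)
  | add hf hg ihf ihg =>
    rw [Finset.sum_add_distrib]
    exact add_nonneg ihf ihg


section Coeffs

variable (Jσ Jτ Jστ : ℝ)

noncomputable def E1 : ℝ := Real.exp (Jσ + Jτ + Jστ)
noncomputable def E2 : ℝ := Real.exp (Jσ - Jτ - Jστ)
noncomputable def E3 : ℝ := Real.exp (-Jσ + Jτ - Jστ)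
noncomputable def E4 : ℝ := Real.exp (-Jσ - Jτ + Jστ)

noncomputable def a0 : ℝ := (E1 Jσ Jτ Jστ + E2 Jσ Jτ Jστ + E3 Jσ Jτ Jστ + E4 Jσ Jτ Jστ) / 4
noncomputable def a1 : ℝ := (E1 Jσ Jτ Jστ + E2 Jσ Jτ Jστ - E3 Jσ Jτ Jστ - E4 Jσ Jτ Jστ) / 4
noncomputable def a2 : ℝ := (E1 Jσ Jτ Jστ - E2 Jσ Jτ Jστ + E3 Jσ Jτ Jστ - E4 Jσ Jτ Jστ) / 4
noncomputable def a3 : ℝ := (E1 Jσ Jτ Jστ - E2 Jσ Jτ Jστ - E3 Jσ Jτ Jστ + E4 Jσ Jτ Jστ) / 4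

lemma E1_pos : 0 < E1 Jσ Jτ Jστ := Real.exp_pos _
lemma E2_pos : 0 < E2 Jσ Jτ Jστ := Real.exp_pos _
lemma E3_pos : 0 < E3 Jσ Jτ Jστ := Real.exp_pos _
lemma E4_pos : 0 < E4 Jσ Jτ Jστ := Real.exp_pos _

lemma fourier (x y : ℝ) (hx : x = 1 ∨ x = -1) (hy : y = 1 ∨ y = -1) :
    Real.exp (Jσ * x + Jτ * y + Jστ * (x * y)) =
      a0 Jσ Jτ Jστ + a1 Jσ Jτ Jστ * x + a2 Jσ Jτ Jστ * y + a3 Jσ Jτ Jστ * (x * y) := by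
  rcases hx with hx | hx <;> rcases hy with hy | hy <;> subst hx hy
  · rw [show Jσ * (1:ℝ) + Jτ * 1 + Jστ * (1 * 1) = Jσ + Jτ + Jστ by ring]
    unfold a0 a1 a2 a3 E1 E2 E3 E4; ring
  · rw [show Jσ * (1:ℝ) + Jτ * (-1) + Jστ * (1 * -1) = Jσ - Jτ - Jστ by ring]
    unfold a0 a1 a2 a3 E1 E2 E3 E4; ring
  · rw [show Jσ * (-1:ℝ) + Jτ * 1 + Jστ * (-1 * 1) = -Jσ + Jτ - Jστ by ring]
    unfold a0 a1 a2 a3 E1 E2 E3 E4; ring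
  · rw [show Jσ * (-1:ℝ) + Jτ * (-1) + Jστ * (-1 * -1) = -Jσ - Jτ + Jστ by ring]
    unfold a0 a1 a2 a3 E1 E2 E3 E4; ring

lemma hE1 : E1 Jσ Jτ Jστ = Real.exp Jσ * Real.exp Jτ * Real.exp Jστ := by
  rw [E1, ← Real.exp_add, ← Real.exp_add]
lemma hE2 : E2 Jσ Jτ Jστ = Real.exp Jσ * Real.exp (-Jτ) * Real.exp (-Jστ) := by
  rw [E2, ← Real.exp_add, ← Real.exp_add]; ring_nf
lemma hE3 : E3 Jσ Jτ Jστ = Real.exp (-Jσ) * Real.exp Jτ * Real.exp (-Jστ) := by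
  rw [E3, ← Real.exp_add, ← Real.exp_add]; ring_nf
lemma hE4 : E4 Jσ Jτ Jστ = Real.exp (-Jσ) * Real.exp (-Jτ) * Real.exp Jστ := by
  rw [E4, ← Real.exp_add, ← Real.exp_add]; ring_nf

section Nonneg

variable {Jσ Jτ Jστ : ℝ}

lemma tanh_cond (h : Real.tanh Jστ ≥ -(Real.tanh Jσ * Real.tanh Jτ)) :
    0 ≤ Real.sinh Jστ * (Real.cosh Jσ * Real.cosh Jτ)
      + Real.cosh Jστ * (Real.sinh Jσ * Real.sinh Jτ) := by
  have hcσ := Real.cosh_pos Jσ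
  have hcτ := Real.cosh_pos Jτ
  have hcK := Real.cosh_pos Jστ
  rw [ge_iff_le, Real.tanh_eq_sinh_div_cosh, Real.tanh_eq_sinh_div_cosh,
    Real.tanh_eq_sinh_div_cosh, div_mul_div_comm, ← neg_div,
    div_le_div_iff₀ (by positivity) hcK] at h
  nlinarith [h]

lemma a3_nonneg (h : Real.tanh Jστ ≥ -(Real.tanh Jσ * Real.tanh Jτ)) :
    0 ≤ a3 Jσ Jτ Jστ := by
  have H := tanh_cond h
  have hex : a3 Jσ Jτ Jστ = Real.sinh Jστ * (Real.cosh Jσ * Real.cosh Jτ)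
      + Real.cosh Jστ * (Real.sinh Jσ * Real.sinh Jτ) := by
    rw [a3, hE1, hE2, hE3, hE4, Real.sinh_eq, Real.sinh_eq, Real.sinh_eq,
      Real.cosh_eq, Real.cosh_eq, Real.cosh_eq]
    ring
  rw [hex]; exact H


lemma a1_nonneg (hJσ : 0 ≤ Jσ) (hJτ : 0 ≤ Jτ)
    (h : Real.tanh Jστ ≥ -(Real.tanh Jσ * Real.tanh Jτ)) : 0 ≤ a1 Jσ Jτ Jστ := by
  have H := tanh_cond h
  have hsσ : 0 ≤ Real.sinh Jσ := Real.sinh_nonneg_iff.mpr hJσ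
  have hsτ : 0 ≤ Real.sinh Jτ := Real.sinh_nonneg_iff.mpr hJτ
  have hcσ := Real.cosh_pos Jσ
  have hcτ := Real.cosh_pos Jτ
  have hcK := Real.cosh_pos Jστ
  have hid := Real.cosh_sq_sub_sinh_sq Jτ
  have hex : a1 Jσ Jτ Jστ = Real.sinh Jσ * (Real.cosh Jτ * Real.cosh Jστ)
      + Real.cosh Jσ * (Real.sinh Jτ * Real.sinh Jστ) := by
    rw [a1, hE1, hE2, hE3, hE4, Real.sinh_eq, Real.sinh_eq, Real.sinh_eq,
      Real.cosh_eq, Real.cosh_eq, Real.cosh_eq]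
    ring
  rw [hex]
  nlinarith [mul_nonneg (mul_nonneg H hsτ) hcτ.le,
    mul_nonneg (mul_nonneg hsσ hcK.le) hcτ.le, mul_pos hcτ hcτ]

lemma a2_nonneg (hJσ : 0 ≤ Jσ) (hJτ : 0 ≤ Jτ)
    (h : Real.tanh Jστ ≥ -(Real.tanh Jσ * Real.tanh Jτ)) : 0 ≤ a2 Jσ Jτ Jστ := by
  have H := tanh_cond h
  have hsσ : 0 ≤ Real.sinh Jσ := Real.sinh_nonneg_iff.mpr hJσ
  have hsτ : 0 ≤ Real.sinh Jτ := Real.sinh_nonneg_iff.mpr hJτ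
  have hcσ := Real.cosh_pos Jσ
  have hcτ := Real.cosh_pos Jτ
  have hcK := Real.cosh_pos Jστ
  have hid := Real.cosh_sq_sub_sinh_sq Jσ
  have hex : a2 Jσ Jτ Jστ = Real.sinh Jτ * (Real.cosh Jσ * Real.cosh Jστ)
      + Real.cosh Jτ * (Real.sinh Jσ * Real.sinh Jστ) := by
    rw [a2, hE1, hE2, hE3, hE4, Real.sinh_eq, Real.sinh_eq, Real.sinh_eq,
      Real.cosh_eq, Real.cosh_eq, Real.cosh_eq]
    ring
  rw [hex]
  nlinarith [mul_nonneg (mul_nonneg H hsσ) hcσ.le,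
    mul_nonneg (mul_nonneg hsτ hcK.le) hcσ.le, mul_pos hcσ hcσ]

lemma a0_nonneg : 0 ≤ a0 Jσ Jτ Jστ := by
  have := E1_pos Jσ Jτ Jστ; have := E2_pos Jσ Jτ Jστ
  have := E3_pos Jσ Jτ Jστ; have := E4_pos Jσ Jτ Jστ
  rw [a0]; linarith

-- the six quadratic coefficient facts
lemma cB_nonneg : 0 ≤ (a0 Jσ Jτ Jστ)^2 + (a1 Jσ Jτ Jστ)^2 - (a2 Jσ Jτ Jστ)^2 - (a3 Jσ Jτ Jστ)^2 := by
  have hid : (a0 Jσ Jτ Jστ)^2 + (a1 Jσ Jτ Jστ)^2 - (a2 Jσ Jτ Jστ)^2 - (a3 Jσ Jτ Jστ)^2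
      = (E1 Jσ Jτ Jστ * E2 Jσ Jτ Jστ + E3 Jσ Jτ Jστ * E4 Jσ Jτ Jστ) / 2 := by
    rw [a0, a1, a2, a3]; ring
  rw [hid]
  have := E1_pos Jσ Jτ Jστ; have := E2_pos Jσ Jτ Jστ
  have := E3_pos Jσ Jτ Jστ; have := E4_pos Jσ Jτ Jστ
  positivity

lemma cC_nonneg : 0 ≤ (a0 Jσ Jτ Jστ)^2 - (a1 Jσ Jτ Jστ)^2 + (a2 Jσ Jτ Jστ)^2 - (a3 Jσ Jτ Jστ)^2 := by
  have hid : (a0 Jσ Jτ Jστ)^2 - (a1 Jσ Jτ Jστ)^2 + (a2 Jσ Jτ Jστ)^2 - (a3 Jσ Jτ Jστ)^2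
      = (E1 Jσ Jτ Jστ * E3 Jσ Jτ Jστ + E2 Jσ Jτ Jστ * E4 Jσ Jτ Jστ) / 2 := by
    rw [a0, a1, a2, a3]; ring
  rw [hid]
  have := E1_pos Jσ Jτ Jστ; have := E2_pos Jσ Jτ Jστ
  have := E3_pos Jσ Jτ Jστ; have := E4_pos Jσ Jτ Jστ
  positivity

lemma cD_nonneg : 0 ≤ (a0 Jσ Jτ Jστ)^2 - (a1 Jσ Jτ Jστ)^2 - (a2 Jσ Jτ Jστ)^2 + (a3 Jσ Jτ Jστ)^2 := by
  have hid : (a0 Jσ Jτ Jστ)^2 - (a1 Jσ Jτ Jστ)^2 - (a2 Jσ Jτ Jστ)^2 + (a3 Jσ Jτ Jστ)^2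
      = (E1 Jσ Jτ Jστ * E4 Jσ Jτ Jστ + E2 Jσ Jτ Jστ * E3 Jσ Jτ Jστ) / 2 := by
    rw [a0, a1, a2, a3]; ring
  rw [hid]
  have := E1_pos Jσ Jτ Jστ; have := E2_pos Jσ Jτ Jστ
  have := E3_pos Jσ Jτ Jστ; have := E4_pos Jσ Jτ Jστ
  positivity

lemma cS_nonneg (hJσ : 0 ≤ Jσ) :
    0 ≤ a0 Jσ Jτ Jστ * a1 Jσ Jτ Jστ - a2 Jσ Jτ Jστ * a3 Jσ Jτ Jστ := by
  have hid : a0 Jσ Jτ Jστ * a1 Jσ Jτ Jστ - a2 Jσ Jτ Jστ * a3 Jσ Jτ Jστ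
      = (E1 Jσ Jτ Jστ * E2 Jσ Jτ Jστ - E3 Jσ Jτ Jστ * E4 Jσ Jτ Jστ) / 4 := by
    rw [a0, a1, a2, a3]; ring
  have h12 : E1 Jσ Jτ Jστ * E2 Jσ Jτ Jστ = Real.exp (2*Jσ) := by
    rw [E1, E2, ← Real.exp_add]; ring_nf
  have h34 : E3 Jσ Jτ Jστ * E4 Jσ Jτ Jστ = Real.exp (-(2*Jσ)) := by
    rw [E3, E4, ← Real.exp_add]; ring_nf
  rw [hid, h12, h34]
  have : Real.exp (-(2*Jσ)) ≤ Real.exp (2*Jσ) := Real.exp_le_exp.mpr (by linarith)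
  linarith

lemma cT_nonneg (hJτ : 0 ≤ Jτ) :
    0 ≤ a0 Jσ Jτ Jστ * a2 Jσ Jτ Jστ - a1 Jσ Jτ Jστ * a3 Jσ Jτ Jστ := by
  have hid : a0 Jσ Jτ Jστ * a2 Jσ Jτ Jστ - a1 Jσ Jτ Jστ * a3 Jσ Jτ Jστ
      = (E1 Jσ Jτ Jστ * E3 Jσ Jτ Jστ - E2 Jσ Jτ Jστ * E4 Jσ Jτ Jστ) / 4 := by
    rw [a0, a1, a2, a3]; ring
  have h13 : E1 Jσ Jτ Jστ * E3 Jσ Jτ Jστ = Real.exp (2*Jτ) := by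
    rw [E1, E3, ← Real.exp_add]; ring_nf
  have h24 : E2 Jσ Jτ Jστ * E4 Jσ Jτ Jστ = Real.exp (-(2*Jτ)) := by
    rw [E2, E4, ← Real.exp_add]; ring_nf
  rw [hid, h13, h24]
  have : Real.exp (-(2*Jτ)) ≤ Real.exp (2*Jτ) := Real.exp_le_exp.mpr (by linarith)
  linarith

lemma cU_nonneg (hJστ : Jστ ≤ 0) :
    0 ≤ a1 Jσ Jτ Jστ * a2 Jσ Jτ Jστ - a0 Jσ Jτ Jστ * a3 Jσ Jτ Jστ := by
  have hid : a1 Jσ Jτ Jστ * a2 Jσ Jτ Jστ - a0 Jσ Jτ Jστ * a3 Jσ Jτ Jστ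
      = (E2 Jσ Jτ Jστ * E3 Jσ Jτ Jστ - E1 Jσ Jτ Jστ * E4 Jσ Jτ Jστ) / 4 := by
    rw [a0, a1, a2, a3]; ring
  have h23 : E2 Jσ Jτ Jστ * E3 Jσ Jτ Jστ = Real.exp (-(2*Jστ)) := by
    rw [E2, E3, ← Real.exp_add]; ring_nf
  have h14 : E1 Jσ Jτ Jστ * E4 Jσ Jτ Jστ = Real.exp (2*Jστ) := by
    rw [E1, E4, ← Real.exp_add]; ring_nf
  rw [hid, h23, h14]
  have : Real.exp (2*Jστ) ≤ Real.exp (-(2*Jστ)) := Real.exp_le_exp.mpr (by linarith)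
  linarith

end Nonneg



end Coeffs


lemma Cone.smul {f : PCfg V → ℝ} (c : ℝ) (hc : 0 ≤ c) (hf : Cone f) :
    Cone (fun p => c * f p) := by
  induction hf with
  | base c' hc' m =>
    have : (fun p : PCfg V => c * (c' * monomial m p)) = fun p => (c * c') * monomial m p := by
      funext p; ring
    rw [this]; exact Cone.base _ (mul_nonneg hc hc') m
  | add h1 h2 ih1 ih2 =>
    have h := Cone.add ih1 ih2
    convert h using 1
    funext p; ring

lemma cone_pair (ℓ1 ℓ2 : V × Bool) (h : ℓ1 ≠ ℓ2) (g1 g2 : Gen) :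
    Cone (fun p => gval g1 (rpair ℓ1 p) * gval g2 (rpair ℓ2 p)) := by
  set m : V × Bool → Gen := fun ℓ => if ℓ = ℓ1 then g1 else if ℓ = ℓ2 then g2 else Gen.one with hm
  have key : (fun p => gval g1 (rpair ℓ1 p) * gval g2 (rpair ℓ2 p))
      = fun p => (1:ℝ) * monomial m p := by
    funext p
    have hsub : monomial m p = ∏ ℓ ∈ ({ℓ1, ℓ2} : Finset (V × Bool)), gval (m ℓ) (rpair ℓ p) :=
      (Finset.prod_subset (Finset.subset_univ _) (fun x _ hx => by
        have h1 : x ≠ ℓ1 := fun hc => hx (by simp [hc])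
        have h2 : x ≠ ℓ2 := fun hc => hx (by simp [hc])
        simp [hm, h1, h2, gval])).symm
    rw [one_mul, hsub, Finset.prod_insert (by simpa using h), Finset.prod_singleton]
    simp [hm, h, Ne.symm h]
  rw [key]
  exact Cone.base 1 zero_le_one m

lemma spin_cases (b : Bool) : spin b = 1 ∨ spin b = -1 := by cases b <;> simp [spin]

lemma spin_mul_cases (b b' : Bool) : spin b * spin b' = 1 ∨ spin b * spin b' = -1 := by
  cases b <;> cases b' <;> norm_num [spin]

lemma sqL1 (a b a' b' : Bool) :
    1 + (spin a * spin b) * (spin a' * spin b') =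
      ((spin a + spin a')^2 * (spin b + spin b')^2
        + (spin a - spin a')^2 * (spin b - spin b')^2) / 8 := by
  cases a <;> cases b <;> cases a' <;> cases b' <;> norm_num [spin]

lemma sqL2 (a b a' b' : Bool) :
    1 - (spin a * spin b) * (spin a' * spin b') =
      ((spin a + spin a')^2 * (spin b - spin b')^2
        + (spin a - spin a')^2 * (spin b + spin b')^2) / 8 := by
  cases a <;> cases b <;> cases a' <;> cases b' <;> norm_num [spin]

section PairCones

variable (i j : V) (hij : i ≠ j)

include hij in
lemma cone_PPσ : Cone (fun p : PCfg V =>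
    1 + (spin (p.1.1 i) * spin (p.1.1 j)) * (spin (p.2.1 i) * spin (p.2.1 j))) := by
  have h1 := cone_pair (V := V) (i, false) (j, false) (by simp [hij]) Gen.s2 Gen.s2
  have h2 := cone_pair (V := V) (i, false) (j, false) (by simp [hij]) Gen.d2 Gen.d2
  have h := Cone.add (Cone.smul (1/8) (by norm_num) h1) (Cone.smul (1/8) (by norm_num) h2)
  convert h using 1
  funext p
  rw [sqL1]
  simp only [rpair, bpair, gval]
  ring

include hij in
lemma cone_PMσ : Cone (fun p : PCfg V =>
    1 - (spin (p.1.1 i) * spin (p.1.1 j)) * (spin (p.2.1 i) * spin (p.2.1 j))) := by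
  have h1 := cone_pair (V := V) (i, false) (j, false) (by simp [hij]) Gen.s2 Gen.d2
  have h2 := cone_pair (V := V) (i, false) (j, false) (by simp [hij]) Gen.d2 Gen.s2
  have h := Cone.add (Cone.smul (1/8) (by norm_num) h1) (Cone.smul (1/8) (by norm_num) h2)
  convert h using 1
  funext p
  rw [sqL2]
  simp only [rpair, bpair, gval]
  ring

include hij in
lemma cone_Sσ : Cone (fun p : PCfg V =>
    spin (p.1.1 i) * spin (p.1.1 j) + spin (p.2.1 i) * spin (p.2.1 j)) := by
  have h1 := cone_pair (V := V) (i, false) (j, false) (by simp [hij]) Gen.s Gen.s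
  have h2 := cone_pair (V := V) (i, false) (j, false) (by simp [hij]) Gen.d Gen.d
  have h := Cone.add (Cone.smul (1/2) (by norm_num) h1) (Cone.smul (1/2) (by norm_num) h2)
  convert h using 1
  funext p
  simp only [rpair, bpair, gval]
  ring

include hij in
lemma cone_Dσ : Cone (fun p : PCfg V =>
    spin (p.1.1 i) * spin (p.1.1 j) - spin (p.2.1 i) * spin (p.2.1 j)) := by
  have h1 := cone_pair (V := V) (i, false) (j, false) (by simp [hij]) Gen.s Gen.d
  have h2 := cone_pair (V := V) (i, false) (j, false) (by simp [hij]) Gen.d Gen.s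
  have h := Cone.add (Cone.smul (1/2) (by norm_num) h1) (Cone.smul (1/2) (by norm_num) h2)
  convert h using 1
  funext p
  simp only [rpair, bpair, gval]
  ring

include hij in
lemma cone_PPτ : Cone (fun p : PCfg V =>
    1 + (spin (p.1.2 i) * spin (p.1.2 j)) * (spin (p.2.2 i) * spin (p.2.2 j))) := by
  have h1 := cone_pair (V := V) (i, true) (j, true) (by simp [hij]) Gen.s2 Gen.s2
  have h2 := cone_pair (V := V) (i, true) (j, true) (by simp [hij]) Gen.d2 Gen.d2
  have h := Cone.add (Cone.smul (1/8) (by norm_num) h1) (Cone.smul (1/8) (by norm_num) h2)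
  convert h using 1
  funext p
  rw [show (spin (p.1.2 i) * spin (p.1.2 j)) * (spin (p.2.2 i) * spin (p.2.2 j))
      = (spin (p.2.2 i) * spin (p.2.2 j)) * (spin (p.1.2 i) * spin (p.1.2 j)) by ring, sqL1]
  simp only [rpair, bpair, gval]
  ring

include hij in
lemma cone_PMτ : Cone (fun p : PCfg V =>
    1 - (spin (p.1.2 i) * spin (p.1.2 j)) * (spin (p.2.2 i) * spin (p.2.2 j))) := by
  have h1 := cone_pair (V := V) (i, true) (j, true) (by simp [hij]) Gen.s2 Gen.d2
  have h2 := cone_pair (V := V) (i, true) (j, true) (by simp [hij]) Gen.d2 Gen.s2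
  have h := Cone.add (Cone.smul (1/8) (by norm_num) h1) (Cone.smul (1/8) (by norm_num) h2)
  convert h using 1
  funext p
  rw [show (spin (p.1.2 i) * spin (p.1.2 j)) * (spin (p.2.2 i) * spin (p.2.2 j))
      = (spin (p.2.2 i) * spin (p.2.2 j)) * (spin (p.1.2 i) * spin (p.1.2 j)) by ring, sqL2]
  simp only [rpair, bpair, gval]
  ring

include hij in
lemma cone_Sτ : Cone (fun p : PCfg V =>
    spin (p.1.2 i) * spin (p.1.2 j) + spin (p.2.2 i) * spin (p.2.2 j)) := by
  have h1 := cone_pair (V := V) (i, true) (j, true) (by simp [hij]) Gen.s Gen.s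
  have h2 := cone_pair (V := V) (i, true) (j, true) (by simp [hij]) Gen.d Gen.d
  have h := Cone.add (Cone.smul (1/2) (by norm_num) h1) (Cone.smul (1/2) (by norm_num) h2)
  convert h using 1
  funext p
  simp only [rpair, bpair, gval]
  ring

include hij in
lemma cone_Dτ : Cone (fun p : PCfg V =>
    spin (p.2.2 i) * spin (p.2.2 j) - spin (p.1.2 i) * spin (p.1.2 j)) := by
  have h1 := cone_pair (V := V) (i, true) (j, true) (by simp [hij]) Gen.s Gen.d
  have h2 := cone_pair (V := V) (i, true) (j, true) (by simp [hij]) Gen.d Gen.s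
  have h := Cone.add (Cone.smul (1/2) (by norm_num) h1) (Cone.smul (1/2) (by norm_num) h2)
  convert h using 1
  funext p
  simp only [rpair, bpair, gval]
  ring

end PairCones


section EdgeCone

variable {Jσ Jτ Jστ : ℝ} (hJσ : 0 ≤ Jσ) (hJτ : 0 ≤ Jτ) (hJστ : Jστ ≤ 0)
    (h : Real.tanh Jστ ≥ -(Real.tanh Jσ * Real.tanh Jτ))

include hJσ hJτ hJστ h in
lemma cone_edge (i j : V) (hij : i ≠ j) :
    Cone (fun p : PCfg V =>
      Real.exp (Jσ * (spin (p.1.1 i) * spin (p.1.1 j))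
          + Jτ * (spin (p.1.2 i) * spin (p.1.2 j))
          + Jστ * (spin (p.1.1 i) * spin (p.1.1 j) * (spin (p.1.2 i) * spin (p.1.2 j)))) *
      Real.exp (Jσ * (spin (p.2.1 i) * spin (p.2.1 j))
          + Jτ * (spin (p.2.2 i) * spin (p.2.2 j))
          + Jστ * (spin (p.2.1 i) * spin (p.2.1 j) * (spin (p.2.2 i) * spin (p.2.2 j))))) := by
  have ha0 := a0_nonneg (Jσ := Jσ) (Jτ := Jτ) (Jστ := Jστ)
  have ha1 := a1_nonneg hJσ hJτ h
  have ha2 := a2_nonneg hJσ hJτ h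
  have ha3 := a3_nonneg (Jσ := Jσ) (Jτ := Jτ) h
  have hq1 : (0:ℝ) ≤ ((a0 Jσ Jτ Jστ)^2 + (a1 Jσ Jτ Jστ)^2 + (a2 Jσ Jτ Jστ)^2 + (a3 Jσ Jτ Jστ)^2)/4 := by positivity
  have hq2 : (0:ℝ) ≤ ((a0 Jσ Jτ Jστ)^2 + (a1 Jσ Jτ Jστ)^2 - (a2 Jσ Jτ Jστ)^2 - (a3 Jσ Jτ Jστ)^2)/4 := by
    linarith [cB_nonneg (Jσ := Jσ) (Jτ := Jτ) (Jστ := Jστ)]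
  have hq3 : (0:ℝ) ≤ ((a0 Jσ Jτ Jστ)^2 - (a1 Jσ Jτ Jστ)^2 + (a2 Jσ Jτ Jστ)^2 - (a3 Jσ Jτ Jστ)^2)/4 := by
    linarith [cC_nonneg (Jσ := Jσ) (Jτ := Jτ) (Jστ := Jστ)]
  have hq4 : (0:ℝ) ≤ ((a0 Jσ Jτ Jστ)^2 - (a1 Jσ Jτ Jστ)^2 - (a2 Jσ Jτ Jστ)^2 + (a3 Jσ Jτ Jστ)^2)/4 := by
    linarith [cD_nonneg (Jσ := Jσ) (Jτ := Jτ) (Jστ := Jστ)]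
  have hq5 : (0:ℝ) ≤ (a0 Jσ Jτ Jστ * a1 Jσ Jτ Jστ + a2 Jσ Jτ Jστ * a3 Jσ Jτ Jστ)/2 := by
    have := mul_nonneg ha0 ha1; have := mul_nonneg ha2 ha3; linarith
  have hq6 : (0:ℝ) ≤ (a0 Jσ Jτ Jστ * a1 Jσ Jτ Jστ - a2 Jσ Jτ Jστ * a3 Jσ Jτ Jστ)/2 := by
    linarith [cS_nonneg (Jτ := Jτ) (Jστ := Jστ) hJσ]
  have hq7 : (0:ℝ) ≤ (a0 Jσ Jτ Jστ * a2 Jσ Jτ Jστ + a1 Jσ Jτ Jστ * a3 Jσ Jτ Jστ)/2 := by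
    have := mul_nonneg ha0 ha2; have := mul_nonneg ha1 ha3; linarith
  have hq8 : (0:ℝ) ≤ (a0 Jσ Jτ Jστ * a2 Jσ Jτ Jστ - a1 Jσ Jτ Jστ * a3 Jσ Jτ Jστ)/2 := by
    linarith [cT_nonneg (Jσ := Jσ) (Jστ := Jστ) hJτ]
  have hq9 : (0:ℝ) ≤ (a0 Jσ Jτ Jστ * a3 Jσ Jτ Jστ + a1 Jσ Jτ Jστ * a2 Jσ Jτ Jστ)/2 := by
    have := mul_nonneg ha0 ha3; have := mul_nonneg ha1 ha2; linarith
  have hq10 : (0:ℝ) ≤ (a1 Jσ Jτ Jστ * a2 Jσ Jτ Jστ - a0 Jσ Jτ Jστ * a3 Jσ Jτ Jστ)/2 := by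
    linarith [cU_nonneg (Jσ := Jσ) (Jτ := Jτ) hJστ]
  have B1 := Cone.smul _ hq1 (Cone.mul (cone_PPσ i j hij) (cone_PPτ i j hij))
  have B2 := Cone.smul _ hq2 (Cone.mul (cone_PPσ i j hij) (cone_PMτ i j hij))
  have B3 := Cone.smul _ hq3 (Cone.mul (cone_PMσ i j hij) (cone_PPτ i j hij))
  have B4 := Cone.smul _ hq4 (Cone.mul (cone_PMσ i j hij) (cone_PMτ i j hij))
  have B5 := Cone.smul _ hq5 (Cone.mul (cone_Sσ i j hij) (cone_PPτ i j hij))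
  have B6 := Cone.smul _ hq6 (Cone.mul (cone_Sσ i j hij) (cone_PMτ i j hij))
  have B7 := Cone.smul _ hq7 (Cone.mul (cone_Sτ i j hij) (cone_PPσ i j hij))
  have B8 := Cone.smul _ hq8 (Cone.mul (cone_Sτ i j hij) (cone_PMσ i j hij))
  have B9 := Cone.smul _ hq9 (Cone.mul (cone_Sσ i j hij) (cone_Sτ i j hij))
  have B10 := Cone.smul _ hq10 (Cone.mul (cone_Dσ i j hij) (cone_Dτ i j hij))
  have htot := ((((((((B1.add B2).add B3).add B4).add B5).add B6).add B7).add B8).add B9).add B10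
  convert htot using 1
  funext p
  rw [fourier Jσ Jτ Jστ _ _ (spin_mul_cases _ _) (spin_mul_cases _ _),
    fourier Jσ Jτ Jστ _ _ (spin_mul_cases _ _) (spin_mul_cases _ _)]
  ring

end EdgeCone


lemma cone_single (ℓ1 : V × Bool) (g : Gen) :
    Cone (fun p => gval g (rpair ℓ1 p)) := by
  set m : V × Bool → Gen := fun ℓ => if ℓ = ℓ1 then g else Gen.one with hm
  have key : (fun p => gval g (rpair ℓ1 p)) = fun p => (1:ℝ) * monomial m p := by
    funext p
    have hsub : monomial m p = ∏ ℓ ∈ ({ℓ1} : Finset (V × Bool)), gval (m ℓ) (rpair ℓ p) :=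
      (Finset.prod_subset (Finset.subset_univ _) (fun x _ hx => by
        have h1 : x ≠ ℓ1 := fun hc => hx (by simp [hc])
        simp [hm, h1, gval])).symm
    rw [one_mul, hsub, Finset.prod_singleton]
    simp [hm]
  rw [key]
  exact Cone.base 1 zero_le_one m

lemma cone_one : Cone (fun _ : PCfg V => (1:ℝ)) := by
  have h := Cone.base 1 zero_le_one (fun _ : V × Bool => Gen.one)
  convert h using 1
  funext p
  simp [monomial, gval]

lemma cone_obsσ (A : Finset V) :
    Cone (fun p : PCfg V => ∏ i ∈ A, spin (p.1.1 i) - ∏ i ∈ A, spin (p.2.1 i)) ∧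
    Cone (fun p : PCfg V => ∏ i ∈ A, spin (p.1.1 i) + ∏ i ∈ A, spin (p.2.1 i)) := by
  induction A using Finset.induction_on with
  | empty =>
    constructor
    · have h := Cone.base (V := V) 0 le_rfl (fun _ => Gen.one)
      convert h using 1
      funext p; simp
    · have h := Cone.base (V := V) 2 (by norm_num) (fun _ => Gen.one)
      convert h using 1
      funext p; simp [monomial, gval]; norm_num
  | @insert a A ha ih =>
    obtain ⟨ihφ, ihψ⟩ := ih
    constructor
    · have h := Cone.smul (1/2) (by norm_num)
        (Cone.add (Cone.mul (cone_single (a, false) Gen.s) ihφ)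
          (Cone.mul (cone_single (a, false) Gen.d) ihψ))
      convert h using 1
      funext p
      rw [Finset.prod_insert ha, Finset.prod_insert ha]
      simp only [rpair, bpair, gval]
      ring
    · have h := Cone.smul (1/2) (by norm_num)
        (Cone.add (Cone.mul (cone_single (a, false) Gen.s) ihψ)
          (Cone.mul (cone_single (a, false) Gen.d) ihφ))
      convert h using 1
      funext p
      rw [Finset.prod_insert ha, Finset.prod_insert ha]
      simp only [rpair, bpair, gval]
      ring

lemma cone_obsτ (A : Finset V) :
    Cone (fun p : PCfg V => ∏ i ∈ A, spin (p.2.2 i) - ∏ i ∈ A, spin (p.1.2 i)) ∧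
    Cone (fun p : PCfg V => ∏ i ∈ A, spin (p.2.2 i) + ∏ i ∈ A, spin (p.1.2 i)) := by
  induction A using Finset.induction_on with
  | empty =>
    constructor
    · have h := Cone.base (V := V) 0 le_rfl (fun _ => Gen.one)
      convert h using 1
      funext p; simp
    · have h := Cone.base (V := V) 2 (by norm_num) (fun _ => Gen.one)
      convert h using 1
      funext p; simp [monomial, gval]; norm_num
  | @insert a A ha ih =>
    obtain ⟨ihφ, ihψ⟩ := ih
    constructor
    · have h := Cone.smul (1/2) (by norm_num)
        (Cone.add (Cone.mul (cone_single (a, true) Gen.s) ihφ)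
          (Cone.mul (cone_single (a, true) Gen.d) ihψ))
      convert h using 1
      funext p
      rw [Finset.prod_insert ha, Finset.prod_insert ha]
      simp only [rpair, bpair, gval]
      ring
    · have h := Cone.smul (1/2) (by norm_num)
        (Cone.add (Cone.mul (cone_single (a, true) Gen.s) ihψ)
          (Cone.mul (cone_single (a, true) Gen.d) ihφ))
      convert h using 1
      funext p
      rw [Finset.prod_insert ha, Finset.prod_insert ha]
      simp only [rpair, bpair, gval]
      ring

lemma cone_prod {ι : Type*} (s : Finset ι) (F : ι → PCfg V → ℝ)
    (hF : ∀ e ∈ s, Cone (F e)) : Cone (fun p => ∏ e ∈ s, F e p) := by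
  classical
  induction s using Finset.induction_on with
  | empty => simpa using cone_one (V := V)
  | @insert e s' ha ih =>
    have h := Cone.mul (hF e (by simp)) (ih (fun e' he' => hF e' (by simp [he'])))
    convert h using 1
    funext p
    rw [Finset.prod_insert ha]


lemma sum_sym {Ω : Type*} [Fintype Ω] (F G W : Ω → ℝ) :
    ∑ p : Ω × Ω, (F p.1 - F p.2) * (G p.1 - G p.2) * (W p.1 * W p.2)
      = 2 * ((∑ ω, F ω * G ω * W ω) * (∑ ω, W ω)
          - (∑ ω, F ω * W ω) * (∑ ω, G ω * W ω)) := by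
  rw [Fintype.sum_prod_type]
  have hsummand : ∀ ω ω' : Ω, (F ω - F ω') * (G ω - G ω') * (W ω * W ω')
      = (F ω * G ω * W ω) * W ω' + W ω * (F ω' * G ω' * W ω')
        - (F ω * W ω) * (G ω' * W ω') - (G ω * W ω) * (F ω' * W ω') := by
    intros; ring
  simp only [hsummand, Finset.sum_add_distrib, Finset.sum_sub_distrib,
    ← Finset.mul_sum, ← Finset.sum_mul]
  ring

lemma sum_sym' {Ω : Type*} [Fintype Ω] (F G W : Ω → ℝ) :
    ∑ p : Ω × Ω, (F p.1 - F p.2) * (G p.2 - G p.1) * (W p.1 * W p.2)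
      = 2 * ((∑ ω, F ω * W ω) * (∑ ω, G ω * W ω)
          - (∑ ω, F ω * G ω * W ω) * (∑ ω, W ω)) := by
  rw [Fintype.sum_prod_type]
  have hsummand : ∀ ω ω' : Ω, (F ω - F ω') * (G ω' - G ω) * (W ω * W ω')
      = (F ω * W ω) * (G ω' * W ω') + (G ω * W ω) * (F ω' * W ω')
        - (F ω * G ω * W ω) * W ω' - W ω * (F ω' * G ω' * W ω') := by
    intros; ring
  simp only [hsummand, Finset.sum_add_distrib, Finset.sum_sub_distrib,
    ← Finset.mul_sum, ← Finset.sum_mul]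
  ring

lemma atWeight_pos (Jσ Jτ Jστ : ℝ) (σf τf : V → ℝ) (e : Sym2 V) :
    0 < atWeight Jσ Jτ Jστ σf τf e := by
  induction e using Sym2.ind with
  | _ i j =>
    simp only [atWeight, Sym2.lift_mk]
    exact Real.exp_pos _

section Main

variable {Jσ Jτ Jστ : ℝ} (G : SimpleGraph V) [DecidableRel G.Adj]

lemma atW_pos (στ : (V → Bool) × (V → Bool)) : 0 < atW G Jσ Jτ Jστ στ :=
  Finset.prod_pos fun e _ => atWeight_pos _ _ _ _ _ _

lemma Z_pos : 0 < ∑ στ : (V → Bool) × (V → Bool), atW G Jσ Jτ Jστ στ :=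
  Finset.sum_pos (fun στ _ => atW_pos G στ) Finset.univ_nonempty

variable (hJσ : 0 ≤ Jσ) (hJτ : 0 ≤ Jτ) (hJστ : Jστ ≤ 0)
    (h : Real.tanh Jστ ≥ -(Real.tanh Jσ * Real.tanh Jτ))

include hJσ hJτ hJστ h in
lemma cone_WW : Cone (fun p : PCfg V => atW G Jσ Jτ Jστ p.1 * atW G Jσ Jτ Jστ p.2) := by
  have hrw : (fun p : PCfg V => atW G Jσ Jτ Jστ p.1 * atW G Jσ Jτ Jστ p.2)
      = fun p => ∏ e ∈ G.edgeFinset,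
          (atWeight Jσ Jτ Jστ (fun i => spin (p.1.1 i)) (fun i => spin (p.1.2 i)) e *
           atWeight Jσ Jτ Jστ (fun i => spin (p.2.1 i)) (fun i => spin (p.2.2 i)) e) := by
    funext p; rw [atW, atW, ← Finset.prod_mul_distrib]
  rw [hrw]
  refine cone_prod _ _ (fun e he => ?_)
  revert he
  induction e using Sym2.ind with
  | _ i j =>
    intro he
    have hadj : G.Adj i j := by rwa [SimpleGraph.mem_edgeFinset, SimpleGraph.mem_edgeSet] at he
    have hij : i ≠ j := hadj.ne
    have hc := cone_edge (V := V) hJσ hJτ hJστ h i j hij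
    convert hc using 1
    funext p; simp only [atWeight, Sym2.lift_mk]

include hJσ hJτ hJστ h in
lemma corr_ge (f g : (V → Bool) × (V → Bool) → ℝ)
    (hC : Cone (fun p : PCfg V => (f p.1 - f p.2) * (g p.1 - g p.2))) :
    atE G Jσ Jτ Jστ f * atE G Jσ Jτ Jστ g ≤ atE G Jσ Jτ Jστ (fun στ => f στ * g στ) := by
  have hZ := Z_pos (Jσ := Jσ) (Jτ := Jτ) (Jστ := Jστ) G
  have hT : 0 ≤ ∑ p : PCfg V,
      ((f p.1 - f p.2) * (g p.1 - g p.2)) * (atW G Jσ Jτ Jστ p.1 * atW G Jσ Jτ Jστ p.2) :=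
    (Cone.mul hC (cone_WW G hJσ hJτ hJστ h)).sum_nonneg
  have hid := sum_sym f g (atW G Jσ Jτ Jστ)
  rw [hid] at hT
  have key : (∑ ω, f ω * atW G Jσ Jτ Jστ ω) * (∑ ω, g ω * atW G Jσ Jτ Jστ ω)
      ≤ (∑ ω, f ω * g ω * atW G Jσ Jτ Jστ ω) * (∑ ω, atW G Jσ Jτ Jστ ω) := by linarith
  unfold atE
  rw [div_mul_div_comm, div_le_div_iff₀ (mul_pos hZ hZ) hZ]
  calc (∑ ω, f ω * atW G Jσ Jτ Jστ ω) * (∑ ω, g ω * atW G Jσ Jτ Jστ ω)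
        * (∑ στ : (V → Bool) × (V → Bool), atW G Jσ Jτ Jστ στ)
      ≤ (∑ ω, f ω * g ω * atW G Jσ Jτ Jστ ω) * (∑ ω, atW G Jσ Jτ Jστ ω)
        * (∑ στ : (V → Bool) × (V → Bool), atW G Jσ Jτ Jστ στ) :=
        mul_le_mul_of_nonneg_right key hZ.le
    _ = (∑ στ : (V → Bool) × (V → Bool), (fun στ => f στ * g στ) στ * atW G Jσ Jτ Jστ στ)
        * ((∑ στ : (V → Bool) × (V → Bool), atW G Jσ Jτ Jστ στ)
          * (∑ στ : (V → Bool) × (V → Bool), atW G Jσ Jτ Jστ στ)) := by ring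

include hJσ hJτ hJστ h in
lemma corr_le (f g : (V → Bool) × (V → Bool) → ℝ)
    (hC : Cone (fun p : PCfg V => (f p.1 - f p.2) * (g p.2 - g p.1))) :
    atE G Jσ Jτ Jστ (fun στ => f στ * g στ) ≤ atE G Jσ Jτ Jστ f * atE G Jσ Jτ Jστ g := by
  have hZ := Z_pos (Jσ := Jσ) (Jτ := Jτ) (Jστ := Jστ) G
  have hT : 0 ≤ ∑ p : PCfg V,
      ((f p.1 - f p.2) * (g p.2 - g p.1)) * (atW G Jσ Jτ Jστ p.1 * atW G Jσ Jτ Jστ p.2) :=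
    (Cone.mul hC (cone_WW G hJσ hJτ hJστ h)).sum_nonneg
  have hid := sum_sym' f g (atW G Jσ Jτ Jστ)
  rw [hid] at hT
  have key : (∑ ω, f ω * g ω * atW G Jσ Jτ Jστ ω) * (∑ ω, atW G Jσ Jτ Jστ ω)
      ≤ (∑ ω, f ω * atW G Jσ Jτ Jστ ω) * (∑ ω, g ω * atW G Jσ Jτ Jστ ω) := by linarith
  unfold atE
  rw [div_mul_div_comm, div_le_div_iff₀ hZ (mul_pos hZ hZ)]
  calc (∑ στ : (V → Bool) × (V → Bool), (fun στ => f στ * g στ) στ * atW G Jσ Jτ Jστ στ)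
        * ((∑ στ : (V → Bool) × (V → Bool), atW G Jσ Jτ Jστ στ)
          * (∑ στ : (V → Bool) × (V → Bool), atW G Jσ Jτ Jστ στ))
      = ((∑ ω, f ω * g ω * atW G Jσ Jτ Jστ ω) * (∑ ω, atW G Jσ Jτ Jστ ω))
        * (∑ στ : (V → Bool) × (V → Bool), atW G Jσ Jτ Jστ στ) := by ring
    _ ≤ ((∑ ω, f ω * atW G Jσ Jτ Jστ ω) * (∑ ω, g ω * atW G Jσ Jτ Jστ ω))
        * (∑ στ : (V → Bool) × (V → Bool), atW G Jσ Jτ Jστ στ) :=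
        mul_le_mul_of_nonneg_right key hZ.le
    _ = _ := by ring

end Main

end AT19

/-- correlation inequalities for the free-boundary Ashkin–Teller measure
with `Jσ, Jτ ≥ 0`, `Jστ ≤ 0` and `tanh Jστ ≥ -tanh Jσ · tanh Jτ`:
`μ(σ_A σ_B) ≥ μ(σ_A)μ(σ_B)`, `μ(τ_A τ_B) ≥ μ(τ_A)μ(τ_B)`, `μ(σ_A τ_B) ≤ μ(σ_A)μ(τ_B)`. -/
theorem stmt19 {V : Type*} [Fintype V] [DecidableEq V] (G : SimpleGraph V)
    [DecidableRel G.Adj]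
    (Jσ Jτ Jστ : ℝ) (hJσ : 0 ≤ Jσ) (hJτ : 0 ≤ Jτ) (hJστ : Jστ ≤ 0)
    (h : Real.tanh Jστ ≥ -(Real.tanh Jσ * Real.tanh Jτ))
    (A B : Finset V) :
    atE G Jσ Jτ Jστ
        (fun στ => (∏ i ∈ A, spin (στ.1 i)) * ∏ i ∈ B, spin (στ.1 i)) ≥
      atE G Jσ Jτ Jστ (fun στ => ∏ i ∈ A, spin (στ.1 i)) *
        atE G Jσ Jτ Jστ (fun στ => ∏ i ∈ B, spin (στ.1 i)) ∧
    atE G Jσ Jτ Jστ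
        (fun στ => (∏ i ∈ A, spin (στ.2 i)) * ∏ i ∈ B, spin (στ.2 i)) ≥
      atE G Jσ Jτ Jστ (fun στ => ∏ i ∈ A, spin (στ.2 i)) *
        atE G Jσ Jτ Jστ (fun στ => ∏ i ∈ B, spin (στ.2 i)) ∧
    atE G Jσ Jτ Jστ
        (fun στ => (∏ i ∈ A, spin (στ.1 i)) * ∏ i ∈ B, spin (στ.2 i)) ≤
      atE G Jσ Jτ Jστ (fun στ => ∏ i ∈ A, spin (στ.1 i)) *
        atE G Jσ Jτ Jστ (fun στ => ∏ i ∈ B, spin (στ.2 i)) := by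
  refine ⟨?_, ?_, ?_⟩
  · exact AT19.corr_ge G hJσ hJτ hJστ h
      (fun στ => ∏ i ∈ A, spin (στ.1 i)) (fun στ => ∏ i ∈ B, spin (στ.1 i))
      (AT19.Cone.mul (AT19.cone_obsσ A).1 (AT19.cone_obsσ B).1)
  · have hm := AT19.Cone.mul (AT19.cone_obsτ (V := V) A).1 (AT19.cone_obsτ (V := V) B).1
    have hC : AT19.Cone (fun p : AT19.PCfg V =>
        ((fun στ : (V → Bool) × (V → Bool) => ∏ i ∈ A, spin (στ.2 i)) p.1 -
          (fun στ : (V → Bool) × (V → Bool) => ∏ i ∈ A, spin (στ.2 i)) p.2) *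
        ((fun στ : (V → Bool) × (V → Bool) => ∏ i ∈ B, spin (στ.2 i)) p.1 -
          (fun στ : (V → Bool) × (V → Bool) => ∏ i ∈ B, spin (στ.2 i)) p.2)) := by
      convert hm using 1
      funext p
      ring
    exact AT19.corr_ge G hJσ hJτ hJστ h
      (fun στ => ∏ i ∈ A, spin (στ.2 i)) (fun στ => ∏ i ∈ B, spin (στ.2 i)) hC
  · exact AT19.corr_le G hJσ hJτ hJστ h
      (fun στ => ∏ i ∈ A, spin (στ.1 i)) (fun στ => ∏ i ∈ B, spin (στ.2 i))
      (AT19.Cone.mul (AT19.cone_obsσ A).1 (AT19.cone_obsτ B).1)
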